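/- Every tight decomposition space X is split: all face maps preserve nondegenerate simplices. Moreover, for every r ≥ 1 no effective r-simplex has degenerate long edge (the intersection of →X_r → X_1 with s_0(X_0) ⊆ X_1 is empty), and every 1-dimensional face of an effective simplex is nondegenerate, so all faces of an effective simplex are effective. -/

import Mathlib

open CategoryTheory CategoryTheory.Limits Simplicial Opposite

/-- A map in the simplex category is *generic* if it preserves the endpoints. -/
def IsGeneric {a b : SimplexCategory} (g : a ⟶ b) : Prop :=
  g.toOrderHom 0 = 0 ∧ g.toOrderHom (Fin.last a.len) = Fin.last b.len

/-- A map in the simplex category is *free* if it is distance preserving. -/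
def IsFree {a b : SimplexCategory} (f : a ⟶ b) : Prop :=
  ∀ i : Fin (a.len + 1), (f.toOrderHom i : ℕ) = (f.toOrderHom 0 : ℕ) + (i : ℕ)

/-- A decomposition space is a simplicial set carrying every pushout in `Δ` of a
generic map `g` along a free map `f` to a pullback of sets. -/
def IsDecomposition (X : SSet) : Prop :=
  ∀ ⦃a b c d : SimplexCategory⦄ (g : a ⟶ b) (f : a ⟶ c) (h : b ⟶ d) (k : c ⟶ d),
    IsGeneric g → IsFree f → IsPushout g f h k →
    IsPullback (X.map h.op) (X.map k.op) (X.map g.op) (X.map f.op)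

/-- A simplicial set is *complete* if all degeneracy maps are injective. -/
def Complete (X : SSet) : Prop :=
  ∀ (n : ℕ) (i : Fin (n + 1)), Function.Injective (X.σ i : X _⦋n⦌ ⟶ X _⦋n + 1⦌)

/-- The free map `[1] → [n]` sending `0, 1` to `i, i+1`; it induces the map
taking the `i`-th principal edge (`0`-indexed) of an `n`-simplex. -/
def principalEdge (n : ℕ) (i : Fin n) : (⦋1⦌ : SimplexCategory) ⟶ ⦋n⦌ :=
  SimplexCategory.mkHom
    { toFun := fun j => ⟨i.1 + j.1, by have := i.2; have := j.2; omega⟩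
      monotone' := fun a b h => by
        simp only [Fin.mk_le_mk]
        exact Nat.add_le_add_left h i.1 }

/-- The unique generic map `[1] → [n]` (`0 ↦ 0`, `1 ↦ n`); it induces the map
taking the long edge of an `n`-simplex. -/
def longEdgeMap (n : ℕ) : (⦋1⦌ : SimplexCategory) ⟶ ⦋n⦌ :=
  SimplexCategory.mkHom
    { toFun := fun j => ⟨j.1 * n, by
        have h := j.2
        have : j.1 * n ≤ 1 * n := Nat.mul_le_mul_right n (by omega)
        omega⟩
      monotone' := fun a b h => by
        simp only [Fin.mk_le_mk]
        exact Nat.mul_le_mul_right n h }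

/-- The alphabet `{0, 1, a}`: `z` prescribes a degenerate principal edge, `o` an
unrestricted one, `a` a nondegenerate one. -/
inductive Letter where
  | z
  | o
  | a : Letter
  deriving DecidableEq

/-- The subset of `X₁` prescribed by a letter. -/
def edgeSet (X : SSet) : Letter → Set (X _⦋1⦌) := fun l => match l with
  | .z => Set.range (X.σ (0 : Fin 1))
  | .o => Set.univ
  | .a => (Set.range (X.σ (0 : Fin 1)))ᶜ

/-- `X_w`, the set of `n`-simplices whose principal edges have the types
prescribed by the word `w`. -/
def wordSet (X : SSet) {n : ℕ} (w : Fin n → Letter) : Set (X _⦋n⦌) :=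
  {σ | ∀ i : Fin n, X.map (principalEdge n i).op σ ∈ edgeSet X (w i)}

/-- A simplex is *effective* if all its principal edges are nondegenerate. -/
def Effective (X : SSet) {n : ℕ} (σ : X _⦋n⦌) : Prop :=
  ∀ i : Fin n, X.map (principalEdge n i).op σ ∉ Set.range (X.σ (0 : Fin 1))

/-- The constant word `aa⋯a`. -/
def allA (n : ℕ) : Fin n → Letter := fun _ => Letter.a

/-- Concatenation of words. -/
def concatW {m n : ℕ} (v : Fin m → Letter) (v' : Fin n → Letter) : Fin (m + n) → Letter :=
  fun i => if h : i.1 < m then v ⟨i.1, h⟩ else v' ⟨i.1 - m, by have := i.2; omega⟩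

/-- The word `v ℓ v'` obtained by splicing a letter `ℓ` between the words `v` and `v'`. -/
def splice {m n : ℕ} (v : Fin m → Letter) (l : Letter) (v' : Fin n → Letter) :
    Fin (m + n + 1) → Letter :=
  fun i => if h : i.1 < m then v ⟨i.1, h⟩
    else if h2 : i.1 = m then l
    else v' ⟨i.1 - (m + 1), by have := i.2; omega⟩

/-- A simplex (of positive dimension) is degenerate if it is in the image of some
degeneracy map. -/
def Degen (X : SSet) {n : ℕ} (σ : X _⦋n + 1⦌) : Prop :=
  ∃ i : Fin (n + 1), σ ∈ Set.range (X.σ i)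

/-- A simplicial map is *cULF* if its naturality squares on all generic maps are
pullbacks. -/
def IsCULF {Y X : SSet} (f : Y ⟶ X) : Prop :=
  ∀ ⦃a b : SimplexCategory⦄ (g : a ⟶ b), IsGeneric g →
    IsPullback (f.app (op b)) (Y.map g.op) (X.map g.op) (f.app (op a))

/-- A simplicial map is *conservative* if its naturality squares on all degeneracy
maps are pullbacks. -/
def Conservative {Y X : SSet} (f : Y ⟶ X) : Prop :=
  ∀ (n : ℕ) (i : Fin (n + 1)),
    IsPullback (f.app (op (SimplexCategory.mk n))) (Y.σ i) (X.σ i)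
      (f.app (op (SimplexCategory.mk (n + 1))))

/-- A simplicial set is *stiff* if it carries every pushout in `Δ` of a codegeneracy
map along a free map to a pullback of sets. -/
def Stiff (X : SSet) : Prop :=
  ∀ (k : ℕ) (i : Fin (k + 1)) ⦃c d : SimplexCategory⦄
    (f : SimplexCategory.mk (k + 1) ⟶ c) (h : SimplexCategory.mk k ⟶ d) (j : c ⟶ d),
    IsFree f → IsPushout (SimplexCategory.σ i) f h j →
    IsPullback (X.map h.op) (X.map j.op) (X.map (SimplexCategory.σ i).op) (X.map f.op)

/-- The map `[0] → [n]` picking out the vertex `i`. -/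
def vertexMap (n : ℕ) (i : Fin (n + 1)) : (⦋0⦌ : SimplexCategory) ⟶ ⦋n⦌ :=
  SimplexCategory.mkHom ⟨fun _ => i, fun _ _ _ => le_refl _⟩

/-- The unique map `[n] → [0]`; it induces the iterated degeneracy `X₀ → Xₙ`. -/
def toZero (n : ℕ) : (⦋n⦌ : SimplexCategory) ⟶ ⦋0⦌ :=
  SimplexCategory.mkHom ⟨fun _ => 0, fun _ _ _ => le_refl _⟩

/-- The generic map `[2] → [m+n]` sending `0,1,2` to `0,m,m+n`. -/
def midMap (m n : ℕ) : (⦋2⦌ : SimplexCategory) ⟶ ⦋m + n⦌ :=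
  SimplexCategory.mkHom
    { toFun := fun j => ⟨if j.1 = 0 then 0 else if j.1 = 1 then m else m + n, by
        split
        · omega
        · split <;> omega⟩
      monotone' := by
        intro a b hab
        have h : a.1 ≤ b.1 := hab
        have ha := a.2
        have hb := b.2
        simp only [Fin.mk_le_mk]
        split <;> split <;> (try split) <;> (try split) <;> omega }

/-- The free map `[m] → [m+n]` onto the initial segment. -/
def freeInitial (m n : ℕ) : (⦋m⦌ : SimplexCategory) ⟶ ⦋m + n⦌ :=
  SimplexCategory.mkHom ⟨fun i => ⟨i.1, by have := i.2; omega⟩, fun a b h => h⟩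

/-- The free map `[n] → [m+n]` onto the final segment. -/
def freeFinal (m n : ℕ) : (⦋n⦌ : SimplexCategory) ⟶ ⦋m + n⦌ :=
  SimplexCategory.mkHom ⟨fun i => ⟨m + i.1, by have := i.2; omega⟩,
    fun a b h => by
      simp only [Fin.mk_le_mk]
      exact Nat.add_le_add_left h m⟩

/-- The word `1aa⋯a` (`n` letters `a`). -/
def oneA (n : ℕ) : Fin (n + 1) → Letter := fun i => if i.1 = 0 then Letter.o else Letter.a

/-- The word `0aa⋯a` (`n` letters `a`). -/
def zeroA (n : ℕ) : Fin (n + 1) → Letter := fun i => if i.1 = 0 then Letter.z else Letter.a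

/-- The word `aa⋯a1` (`n` letters `a`). -/
def aOne (n : ℕ) : Fin (n + 1) → Letter := fun i => if i.1 = n then Letter.o else Letter.a

/-- The word `aa⋯a0` (`n` letters `a`). -/
def aZero (n : ℕ) : Fin (n + 1) → Letter := fun i => if i.1 = n then Letter.z else Letter.a

/-- The number of letters `0` in a word. -/
def zcount {n : ℕ} (w : Fin n → Letter) : ℕ :=
  (Finset.univ.filter fun i => w i = Letter.z).card

/-- The surjection `[n] → [n - zcount w]` collapsing, for each position `j` with
`w j = 0`, the vertex `j+1` onto the vertex `j`; the induced map
`X_{n - zcount w} → X_n` is the iterated degeneracy `s_{j_k} ⋯ s_{j_1}` where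
`j_1 < ⋯ < j_k` are the positions of the letters `0` of `w`. -/
def collapseMap {n : ℕ} (w : Fin n → Letter) :
    (⦋n⦌ : SimplexCategory) ⟶ ⦋n - zcount w⦌ :=
  SimplexCategory.mkHom
    { toFun := fun t =>
        ⟨(Finset.univ.filter fun i : Fin n => i.1 < t.1 ∧ ¬ (w i = Letter.z)).card, by
          have h2 := Finset.card_filter_add_card_filter_not
            (s := (Finset.univ : Finset (Fin n))) (p := fun i => w i = Letter.z)
          have h1 : (Finset.univ.filter fun i : Fin n => i.1 < t.1 ∧ ¬ (w i = Letter.z)).card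
              ≤ (Finset.univ.filter fun i : Fin n => ¬ (w i = Letter.z)).card :=
            Finset.card_le_card (fun x hx => by
              simp only [Finset.mem_filter] at hx ⊢
              exact ⟨hx.1, hx.2.2⟩)
          have h3 : zcount w = (Finset.univ.filter fun i : Fin n => w i = Letter.z).card := rfl
          simp only [Finset.card_univ, Fintype.card_fin] at h2
          omega⟩
      monotone' := by
        intro a b hab
        have h : a.1 ≤ b.1 := hab
        simp only [Fin.mk_le_mk]
        exact Finset.card_le_card (fun x hx => by
          simp only [Finset.mem_filter] at hx ⊢
          exact ⟨hx.1, lt_of_lt_of_le hx.2.1 h, hx.2.2⟩) }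

/-- An edge has finite length if there is a bound on the dimensions of the effective
simplices having it as long edge. -/
def FiniteLength (X : SSet) (a : X _⦋1⦌) : Prop :=
  ∃ N : ℕ, ∀ (n : ℕ) (σ : X _⦋n⦌), Effective X σ →
    X.map (longEdgeMap n).op σ = a → n ≤ N

/-- A *tight* decomposition space: a complete decomposition space in which every edge
has finite length. -/
def Tight (X : SSet) : Prop :=
  IsDecomposition X ∧ Function.Injective (X.σ (0 : Fin 1) : X _⦋0⦌ ⟶ X _⦋1⦌) ∧
    ∀ a : X _⦋1⦌, FiniteLength X a

/-- The length of an edge: the supremum of the dimensions of effective simplices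
having it as long edge. -/
noncomputable def edgeLength (X : SSet) (a : X _⦋1⦌) : ℕ :=
  sSup (setOf fun n : ℕ => ∃ σ : X _⦋n⦌, Effective X σ ∧ X.map (longEdgeMap n).op σ = a)

/-- A complete simplicial set is *split* if all face maps preserve nondegenerate
simplices. -/
def Split (X : SSet) : Prop :=
  Complete X ∧ ∀ (n : ℕ) (i : Fin (n + 3)) (σ : X _⦋n + 2⦌),
    ¬ Degen X σ → ¬ Degen X (X.δ i σ)

/-- The counit: the indicator function of the degenerate edges. -/
noncomputable def epsFun (X : SSet) : X _⦋1⦌ → ℚ := fun f =>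
  haveI := Classical.propDecidable (f ∈ Set.range (X.σ (0 : Fin 1)))
  if f ∈ Set.range (X.σ (0 : Fin 1)) then 1 else 0

/-- Convolution product on `ℚ`-valued functions on `X₁`. -/
noncomputable def convFun (X : SSet) (φ ψ : X _⦋1⦌ → ℚ) : X _⦋1⦌ → ℚ :=
  fun f => ∑ᶠ σ ∈ (fun τ => X.δ (1 : Fin 3) τ) ⁻¹' {f},
    φ (X.δ (2 : Fin 3) σ) * ψ (X.δ (0 : Fin 3) σ)

/-- The Möbius function `Φ_even - Φ_odd`. -/
noncomputable def muFun (X : SSet) : X _⦋1⦌ → ℚ :=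
  fun f => ∑ᶠ n : ℕ, (-1 : ℚ) ^ n *
    (Nat.card {σ : X.obj (op (SimplexCategory.mk n)) // Effective X σ ∧ X.map (longEdgeMap n).op σ = f} : ℚ)

/-- The category `Δ_inj`: objects those of the simplex category, morphisms the
injective monotone maps. -/
structure DeltaInj : Type where
  /-- the underlying object of the simplex category -/
  obj : SimplexCategory

instance : Category DeltaInj where
  Hom a b := {f : a.obj ⟶ b.obj // Function.Injective f.toOrderHom}
  id a := ⟨𝟙 a.obj, by
    rw [SimplexCategory.id_toOrderHom]
    exact fun x y h => h⟩
  comp f g := ⟨f.1 ≫ g.1, by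
    rw [SimplexCategory.comp_toOrderHom]
    exact fun x y h => f.2 (g.2 h)⟩
  id_comp f := by apply Subtype.ext; simp
  comp_id f := by apply Subtype.ext; simp
  assoc f g h := by apply Subtype.ext; simp

/-- The inclusion functor `Δ_inj ⊆ Δ`. -/
def DeltaInj.incl : DeltaInj ⥤ SimplexCategory where
  obj a := a.obj
  map f := f.1

/-- A *semi-decomposition space*: a semi-simplicial set carrying every pushout in
`Δ_inj` of a generic (inner) face map along a free (outer) face map to a pullback. -/
def IsSemiDecomposition (Z : DeltaInjᵒᵖ ⥤ Type) : Prop :=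
  ∀ ⦃a b c d : DeltaInj⦄ (g : a ⟶ b) (f : a ⟶ c) (h : b ⟶ d) (k : c ⟶ d),
    IsGeneric g.1 → IsFree f.1 → IsPushout g f h k →
    IsPullback (Z.map h.op) (Z.map k.op) (Z.map g.op) (Z.map f.op)

/-- A map of semi-simplicial sets is *ULF* if its naturality squares on all generic
face maps are pullbacks. -/
def IsULF {Z W : DeltaInjᵒᵖ ⥤ Type} (φ : Z ⟶ W) : Prop :=
  ∀ ⦃a b : DeltaInj⦄ (g : a ⟶ b), IsGeneric g.1 →
    IsPullback (φ.app (op b)) (Z.map g.op) (W.map g.op) (φ.app (op a))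

lemma conservative_id (X : SSet) : Conservative (𝟙 X) := by
  intro n i
  exact IsPullback.of_horiz_isIso ⟨by simp⟩

lemma conservative_comp {X Y Z : SSet} {f : X ⟶ Y} {g : Y ⟶ Z}
    (hf : Conservative f) (hg : Conservative g) : Conservative (f ≫ g) := by
  intro n i
  simpa using IsPullback.paste_horiz (hf n i) (hg n i)

lemma isCULF_id (X : SSet) : IsCULF (𝟙 X) := by
  intro a b gm hgm
  exact IsPullback.of_horiz_isIso ⟨by simp⟩

lemma isCULF_comp {X Y Z : SSet} {f : X ⟶ Y} {g : Y ⟶ Z}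
    (hf : IsCULF f) (hg : IsCULF g) : IsCULF (f ≫ g) := by
  intro a b gm hgm
  simpa using IsPullback.paste_horiz (hf gm hgm) (hg gm hgm)

lemma isULF_id (Z : DeltaInjᵒᵖ ⥤ Type) : IsULF (𝟙 Z) := by
  intro a b gm hgm
  exact IsPullback.of_horiz_isIso ⟨by simp⟩

lemma isULF_comp {X Y Z : DeltaInjᵒᵖ ⥤ Type} {f : X ⟶ Y} {g : Y ⟶ Z}
    (hf : IsULF f) (hg : IsULF g) : IsULF (f ≫ g) := by
  intro a b gm hgm
  simpa using IsPullback.paste_horiz (hf gm hgm) (hg gm hgm)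

/-- The category of split simplicial sets and conservative maps. -/
structure SplitSSet : Type 1 where
  /-- the underlying simplicial set -/
  X : SSet.{0}
  split : Split X

instance : Category SplitSSet where
  Hom A B := {f : A.X ⟶ B.X // Conservative f}
  id A := ⟨𝟙 A.X, conservative_id A.X⟩
  comp f g := ⟨f.1 ≫ g.1, conservative_comp f.2 g.2⟩
  id_comp f := by apply Subtype.ext; simp
  comp_id f := by apply Subtype.ext; simp
  assoc f g h := by apply Subtype.ext; simp

/-- The forgetful functor from split simplicial sets to simplicial sets. -/
def SplitSSet.forget : SplitSSet ⥤ SSet where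
  obj A := A.X
  map f := f.1

/-- The category of split decomposition spaces and cULF maps. -/
structure SplitDecomp : Type 1 where
  /-- the underlying simplicial set -/
  X : SSet.{0}
  split : Split X
  decomp : IsDecomposition X

instance : Category SplitDecomp where
  Hom A B := {f : A.X ⟶ B.X // IsCULF f}
  id A := ⟨𝟙 A.X, isCULF_id A.X⟩
  comp f g := ⟨f.1 ≫ g.1, isCULF_comp f.2 g.2⟩
  id_comp f := by apply Subtype.ext; simp
  comp_id f := by apply Subtype.ext; simp
  assoc f g h := by apply Subtype.ext; simp

/-- The forgetful functor from split decomposition spaces to simplicial sets. -/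
def SplitDecomp.forget : SplitDecomp ⥤ SSet where
  obj A := A.X
  map f := f.1

/-- The category of semi-decomposition spaces and ULF maps. -/
structure SemiDecomp : Type 1 where
  /-- the underlying semi-simplicial set -/
  Z : DeltaInjᵒᵖ ⥤ Type
  semidecomp : IsSemiDecomposition Z

instance : Category SemiDecomp where
  Hom A B := {φ : A.Z ⟶ B.Z // IsULF φ}
  id A := ⟨𝟙 A.Z, isULF_id A.Z⟩
  comp f g := ⟨f.1 ≫ g.1, isULF_comp f.2 g.2⟩
  id_comp f := by apply Subtype.ext; simp
  comp_id f := by apply Subtype.ext; simp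
  assoc f g h := by apply Subtype.ext; simp

/-- The forgetful functor from semi-decomposition spaces to semi-simplicial sets. -/
def SemiDecomp.forget : SemiDecomp ⥤ (DeltaInjᵒᵖ ⥤ Type) where
  obj A := A.Z
  map f := f.1

/-!
In a decomposition space, `s_i : X_n → X_{n+1}` is the pullback of `s₀ : X₀ → X₁` along the
`i`-th principal edge `X_{n+1} → X₁`, because `σⁱ : [n+1] → [n]` is the pushout in `Δ` of the
generic `s⁰ : [1] → [0]` along that free edge. So a simplex of positive dimension is degenerate
exactly when it is not effective, and completeness reduces to injectivity of `s₀`.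

If an effective `r`-simplex `σ` with `r > 0` had degenerate long edge `s₀ x`, then any effective
simplex `τ` with long edge `s₀ x` could be glued to `s₀ σ` along that edge (another
decomposition-space pullback), giving an effective simplex of dimension `dim τ + r` with the same
long edge; iterating contradicts finite length. An injective edge of a simplex is the long edge of
a segment, which is effective whenever the simplex is, so faces of effective simplices are
effective, and splitness follows.
-/

namespace SimplexCategory

lemma hom_ext_val {a b : SimplexCategory} {f g : a ⟶ b}
    (h : ∀ t, (f.toOrderHom t : ℕ) = g.toOrderHom t) : f = g :=
  Hom.ext _ _ (OrderHom.ext _ _ (funext fun t => Fin.ext (h t)))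

@[simp]
lemma comp_apply_val {a b c : SimplexCategory} (f : a ⟶ b) (g : b ⟶ c) (t : Fin (a.len + 1)) :
    ((f ≫ g).toOrderHom t : ℕ) = g.toOrderHom (f.toOrderHom t) := rfl

lemma σ_apply_val {n : ℕ} (i : Fin (n + 1)) (t : Fin (n + 2)) :
    ((σ i).toOrderHom t : ℕ) = if (i : ℕ) < t then (t : ℕ) - 1 else (t : ℕ) := by
  simp only [σ, mkHom, Hom.toOrderHom_mk, Fin.predAboveOrderHom_coe, Fin.predAbove]
  rcases Nat.lt_or_ge i.1 t.1 with h | h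
  · rw [dif_pos (by simpa [Fin.lt_def] using h), if_pos h]; rfl
  · rw [dif_neg (by simp [Fin.lt_def]; omega), if_neg (by omega)]; rfl

lemma δ_apply_val {n : ℕ} (i : Fin (n + 2)) (t : Fin (n + 1)) :
    ((δ i).toOrderHom t : ℕ) = if (t : ℕ) < i then (t : ℕ) else (t : ℕ) + 1 := by
  simp only [δ, mkHom, Hom.toOrderHom_mk, OrderEmbedding.toOrderHom_coe,
    Fin.succAboveOrderEmb_apply, Fin.succAbove]
  rcases Nat.lt_or_ge t.1 i.1 with h | h
  · rw [if_pos (by simpa [Fin.lt_def] using h), if_pos h]; rfl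
  · rw [if_neg (by simp [Fin.lt_def]; omega), if_neg (by omega)]; rfl

end SimplexCategory

open SimplexCategory

@[simp]
lemma principalEdge_apply (n : ℕ) (i : Fin n) (t : Fin 2) :
    ((principalEdge n i).toOrderHom t : ℕ) = i + t := rfl

@[simp]
lemma longEdgeMap_apply (n : ℕ) (t : Fin 2) :
    ((longEdgeMap n).toOrderHom t : ℕ) = t * n := rfl

@[simp]
lemma vertexMap_apply (n : ℕ) (i : Fin (n + 1)) (t : Fin 1) :
    ((vertexMap n i).toOrderHom t : ℕ) = i := rfl

@[simp]
lemma freeInitial_apply (m n : ℕ) (t : Fin (m + 1)) :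
    ((freeInitial m n).toOrderHom t : ℕ) = t := rfl

lemma isGeneric_longEdgeMap (n : ℕ) : IsGeneric (longEdgeMap n) :=
  ⟨Fin.ext (by simp), Fin.ext (by simp)⟩

lemma isFree_principalEdge (n : ℕ) (i : Fin n) : IsFree (principalEdge n i) :=
  fun t => by simp

lemma isGeneric_σ_zero : IsGeneric (σ (0 : Fin 1)) :=
  ⟨Fin.ext (by simp), Fin.ext (by simp)⟩

section SegmentReplacement

variable {a b c d : SimplexCategory} {g : a ⟶ b} {f : a ⟶ c} {h : b ⟶ d} {k : c ⟶ d}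

lemma IsFree.apply_le (hf : IsFree f) : (f.toOrderHom 0 : ℕ) + a.len ≤ c.len := by
  have := hf (Fin.last _)
  have := (f.toOrderHom (Fin.last _)).2
  simp_all

/-- `d` is `c` with the segment `f(a)` replaced by the copy `h(b)` of `b`. -/
structure IsSegmentReplacement (f : a ⟶ c) (h : b ⟶ d) (k : c ⟶ d) : Prop where
  len_eq : d.len + a.len = c.len + b.len
  h_apply : ∀ t, (h.toOrderHom t : ℕ) = f.toOrderHom 0 + t
  k_apply_of_lt : ∀ s : Fin (c.len + 1), (s : ℕ) < f.toOrderHom 0 → (k.toOrderHom s : ℕ) = s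
  k_apply_of_gt : ∀ s : Fin (c.len + 1), (f.toOrderHom 0 : ℕ) + a.len < s →
    (k.toOrderHom s : ℕ) + a.len = s + b.len

namespace IsSegmentReplacement

lemma exists_eq_or_exists_eq (H : IsSegmentReplacement f h k) (t : Fin (d.len + 1)) :
    (∃ j, h.toOrderHom j = t) ∨ ∃ s, k.toOrderHom s = t := by
  have ht := t.2
  have hp : (f.toOrderHom 0 : ℕ) < c.len + 1 := (f.toOrderHom 0).2
  have := H.len_eq
  by_cases h₁ : (t : ℕ) < f.toOrderHom 0
  · exact .inr ⟨⟨t, by omega⟩, Fin.ext (H.k_apply_of_lt _ h₁)⟩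
  by_cases h₂ : (t : ℕ) ≤ f.toOrderHom 0 + b.len
  · exact .inl ⟨⟨t - f.toOrderHom 0, by omega⟩, Fin.ext (by simp only [H.h_apply]; omega)⟩
  · refine .inr ⟨⟨t + a.len - b.len, by omega⟩, Fin.ext ?_⟩
    have := H.k_apply_of_gt ⟨t + a.len - b.len, by omega⟩ (by simp only; omega)
    simp only at this
    omega

def descFun (H : IsSegmentReplacement f h k) {e : SimplexCategory} (u : b ⟶ e) (v : c ⟶ e)
    (t : Fin (d.len + 1)) : Fin (e.len + 1) :=
  if h₁ : (t : ℕ) < f.toOrderHom 0 then v.toOrderHom ⟨t, by have := (f.toOrderHom 0).2; omega⟩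
  else if h₂ : (t : ℕ) ≤ f.toOrderHom 0 + b.len then u.toOrderHom ⟨t - f.toOrderHom 0, by omega⟩
  else v.toOrderHom ⟨t + a.len - b.len, by have := t.2; have := H.len_eq; omega⟩

lemma monotone_descFun (H : IsSegmentReplacement f h k) (hg : IsGeneric g) (hf : IsFree f)
    {e : SimplexCategory} {u : b ⟶ e} {v : c ⟶ e} (huv : g ≫ u = f ≫ v) :
    Monotone (H.descFun u v) := by
  set p : ℕ := (f.toOrderHom 0 : ℕ)
  have hp : p + a.len ≤ c.len := hf.apply_le
  have hfree (j : Fin (a.len + 1)) : f.toOrderHom j = ⟨p + j, by omega⟩ := Fin.ext (hf j)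
  have hvm := v.toOrderHom.monotone
  have hum := u.toOrderHom.monotone
  have cross_start (i j : ℕ) (hi : i ≤ p) (hj : j ≤ b.len) :
      v.toOrderHom ⟨i, by omega⟩ ≤ u.toOrderHom ⟨j, by omega⟩ :=
    calc _ ≤ v.toOrderHom ⟨p, by omega⟩ := hvm (Fin.mk_le_mk.2 hi)
      _ = u.toOrderHom 0 := by simpa [hg.1, hfree] using congrArg (·.toOrderHom 0) huv.symm
      _ ≤ _ := hum (Fin.mk_le_mk.2 (Nat.zero_le _))
  have cross_end (i j : ℕ) (hi : i ≤ b.len) (hj : p + a.len ≤ j) (hj' : j ≤ c.len) :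
      u.toOrderHom ⟨i, by omega⟩ ≤ v.toOrderHom ⟨j, by omega⟩ :=
    calc _ ≤ u.toOrderHom (Fin.last _) := hum (Fin.mk_le_mk.2 hi)
      _ = v.toOrderHom ⟨p + a.len, by omega⟩ := by
        simpa [hg.2, hfree] using congrArg (·.toOrderHom (Fin.last _)) huv
      _ ≤ _ := hvm (Fin.mk_le_mk.2 hj)
  intro x y hxy
  have hxy' : (x : ℕ) ≤ y := hxy
  have := y.2
  have := H.len_eq
  simp only [descFun]
  split_ifs
  all_goals first
    | omega
    | exact hvm (Fin.mk_le_mk.2 (by omega))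
    | exact hum (Fin.mk_le_mk.2 (by omega))
    | exact cross_start _ _ (by omega) (by omega)
    | exact cross_end _ _ (by omega) (by omega) (by omega)

lemma exists_desc (H : IsSegmentReplacement f h k) (hg : IsGeneric g) (hf : IsFree f)
    (w : g ≫ h = f ≫ k) {e : SimplexCategory} (u : b ⟶ e) (v : c ⟶ e)
    (huv : g ≫ u = f ≫ v) : ∃ φ : d ⟶ e, h ≫ φ = u ∧ k ≫ φ = v := by
  set p : ℕ := (f.toOrderHom 0 : ℕ)
  let φ : d ⟶ e := mkHom ⟨H.descFun u v, H.monotone_descFun hg hf huv⟩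
  have hφh : h ≫ φ = u := by
    refine hom_ext_val fun j => ?_
    have hj := H.h_apply j
    have := j.2
    show (H.descFun u v (h.toOrderHom j) : ℕ) = _
    simp only [descFun]
    rw [dif_neg (by omega), dif_pos (by omega)]
    congr 2
    exact Fin.ext (by simp only; omega)
  refine ⟨φ, hφh, hom_ext_val fun s => ?_⟩
  have := s.2
  by_cases h₁ : (s : ℕ) < p
  · have hs := H.k_apply_of_lt s h₁
    show (H.descFun u v (k.toOrderHom s) : ℕ) = _
    simp only [descFun]
    rw [dif_pos (by omega)]
    congr 2
    exact Fin.ext hs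
  by_cases h₂ : (s : ℕ) ≤ p + a.len
  · obtain ⟨j, rfl⟩ : ∃ j, f.toOrderHom j = s :=
      ⟨⟨s - p, by omega⟩, Fin.ext (by rw [hf]; simp only; omega)⟩
    change (((f ≫ k) ≫ φ).toOrderHom j : ℕ) = ((f ≫ v).toOrderHom j : ℕ)
    rw [← w, Category.assoc, hφh, huv]
  · have hs := H.k_apply_of_gt s (by omega)
    have := H.len_eq
    show (H.descFun u v (k.toOrderHom s) : ℕ) = _
    simp only [descFun]
    rw [dif_neg (by omega), dif_neg (by omega)]
    congr 2
    exact Fin.ext (by simp only; omega)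

theorem isPushout (H : IsSegmentReplacement f h k) (hg : IsGeneric g) (hf : IsFree f)
    (w : g ≫ h = f ≫ k) : IsPushout g f h k := by
  have hext {e : SimplexCategory} {φ ψ : d ⟶ e} (h₁ : h ≫ φ = h ≫ ψ) (h₂ : k ≫ φ = k ≫ ψ) :
      φ = ψ := by
    refine hom_ext_val fun t => ?_
    rcases H.exists_eq_or_exists_eq t with ⟨j, rfl⟩ | ⟨s, rfl⟩
    · exact congrArg (fun q => (q.toOrderHom j : ℕ)) h₁
    · exact congrArg (fun q => (q.toOrderHom s : ℕ)) h₂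
  choose desc hdesc using fun s : PushoutCocone g f =>
    H.exists_desc hg hf w s.inl s.inr s.condition
  exact .of_isColimit <| PushoutCocone.IsColimit.mk w desc (fun s => (hdesc s).1)
    (fun s => (hdesc s).2) fun s m h₁ h₂ =>
      hext (h₁.trans (hdesc s).1.symm) (h₂.trans (hdesc s).2.symm)

end IsSegmentReplacement

end SegmentReplacement

lemma isPushout_σ (n : ℕ) (i : Fin (n + 1)) :
    IsPushout (σ (0 : Fin 1)) (principalEdge (n + 1) i) (vertexMap n i) (σ i) := by
  refine IsSegmentReplacement.isPushout ⟨rfl, fun t => ?_, fun s hs => ?_, fun s hs => ?_⟩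
    isGeneric_σ_zero (isFree_principalEdge _ _) (hom_ext_val fun t => ?_)
  · simp [Fin.fin_one_eq_zero t]
  · simp only [principalEdge_apply, Fin.val_zero, add_zero] at hs
    rw [σ_apply_val, if_neg (by omega)]
  · simp only [principalEdge_apply, Fin.val_zero, add_zero] at hs
    simp only [σ_apply_val, if_pos (show (i : ℕ) < s by omega)]
    omega
  · fin_cases t <;> simp [σ_apply_val]

def glueMap (m r : ℕ) : (⦋r + 1⦌ : SimplexCategory) ⟶ ⦋m + r⦌ :=
  mkHom
    { toFun := fun t => ⟨if (t : ℕ) = 0 then 0 else m + t - 1, by have := t.2; split <;> omega⟩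
      monotone' := fun x y hxy => by
        have : (x : ℕ) ≤ y := hxy
        simp only [Fin.mk_le_mk]
        split <;> split <;> omega }

@[simp]
lemma glueMap_apply (m r : ℕ) (t : Fin (r + 2)) :
    ((glueMap m r).toOrderHom t : ℕ) = if (t : ℕ) = 0 then 0 else m + t - 1 := rfl

lemma isPushout_glueMap (m r : ℕ) :
    IsPushout (longEdgeMap m) (principalEdge (r + 1) 0) (freeInitial m r) (glueMap m r) := by
  refine IsSegmentReplacement.isPushout ⟨by simp; omega, fun t => by simp, fun s hs => ?_,
    fun s hs => ?_⟩ (isGeneric_longEdgeMap m) (isFree_principalEdge _ _) (hom_ext_val fun t => ?_)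
  · simp at hs
  · simp only [principalEdge_apply, Fin.val_zero, zero_add] at hs
    simp only [glueMap_apply, if_neg (show (s : ℕ) ≠ 0 by omega)]
    omega
  · fin_cases t <;> simp

lemma vertexMap_zero_eq_comp_longEdgeMap (r : ℕ) :
    vertexMap r 0 = vertexMap 1 0 ≫ longEdgeMap r :=
  hom_ext_val fun t => by simp

lemma principalEdge_castAdd (m r : ℕ) (j : Fin m) :
    principalEdge (m + r) (Fin.castAdd r j) = principalEdge m j ≫ freeInitial m r :=
  hom_ext_val fun t => by simp

lemma principalEdge_natAdd (m r : ℕ) (j : Fin r) :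
    principalEdge (m + r) (Fin.natAdd m j) = principalEdge (r + 1) j.succ ≫ glueMap m r :=
  hom_ext_val fun t => by simp; omega

lemma principalEdge_succ_comp_σ_zero (r : ℕ) (j : Fin r) :
    principalEdge (r + 1) j.succ ≫ σ 0 = principalEdge r j :=
  hom_ext_val fun t => by simp [σ_apply_val]

lemma longEdgeMap_eq_comp_glueMap (m r : ℕ) :
    longEdgeMap (m + r) = longEdgeMap (r + 1) ≫ glueMap m r :=
  hom_ext_val fun t => by fin_cases t <;> simp

lemma longEdgeMap_succ_comp_σ_zero (r : ℕ) : longEdgeMap (r + 1) ≫ σ 0 = longEdgeMap r :=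
  hom_ext_val fun t => by fin_cases t <;> simp [σ_apply_val]

lemma exists_longEdgeMap_comp_eq {n : ℕ} (e : ⦋1⦌ ⟶ ⦋n⦌) (he : Function.Injective e.toOrderHom) :
    ∃ d, 0 < d ∧ ∃ f : ⦋d⦌ ⟶ ⦋n⦌, IsFree f ∧ longEdgeMap d ≫ f = e := by
  set p : ℕ := (e.toOrderHom 0 : ℕ)
  set q : ℕ := (e.toOrderHom 1 : ℕ)
  have hpq : p < q := lt_of_le_of_ne (e.toOrderHom.monotone (Fin.zero_le _))
    fun h => zero_ne_one (he (Fin.ext h))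
  have hq : q ≤ n := Nat.lt_succ_iff.1 (e.toOrderHom 1).2
  refine ⟨q - p, by omega, mkHom ⟨fun t => ⟨p + t, by have := t.2; simp at this ⊢; omega⟩,
    fun s t hst => Fin.mk_le_mk.2 (Nat.add_le_add_left hst p)⟩, fun t => rfl,
    hom_ext_val fun t => ?_⟩
  change p + ((longEdgeMap (q - p)).toOrderHom t : ℕ) = _
  fin_cases t <;> simp [p, q]
  omega

section DecompositionSpace

variable {X : SSet}

lemma map_op_comp_apply {a b c : SimplexCategory} (e : a ⟶ b) (h : b ⟶ c) (y : X.obj (op c)) :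
    X.map (e ≫ h).op y = X.map e.op (X.map h.op y) := by
  rw [op_comp, Functor.map_comp_apply]

lemma σ_apply_eq_map {n : ℕ} (i : Fin (n + 1)) (y : X _⦋n⦌) :
    X.σ i y = X.map (SimplexCategory.σ i).op y := rfl

lemma map_principalEdge_σ_apply {n : ℕ} (i : Fin (n + 1)) (y : X _⦋n⦌) :
    X.map (principalEdge (n + 1) i).op (X.σ i y) = X.σ 0 (X.map (vertexMap n i).op y) := by
  rw [σ_apply_eq_map, σ_apply_eq_map, ← map_op_comp_apply, ← map_op_comp_apply,
    (isPushout_σ n i).w]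

lemma IsDecomposition.isPullback_σ (hX : IsDecomposition X) (n : ℕ) (i : Fin (n + 1)) :
    IsPullback (X.map (vertexMap n i).op) (X.σ i) (X.σ 0) (X.map (principalEdge (n + 1) i).op) :=
  hX _ _ _ _ isGeneric_σ_zero (isFree_principalEdge _ _) (isPushout_σ n i)

lemma IsDecomposition.mem_range_σ_iff (hX : IsDecomposition X) {n : ℕ} (i : Fin (n + 1))
    (τ : X _⦋n + 1⦌) :
    τ ∈ Set.range (X.σ i) ↔ X.map (principalEdge (n + 1) i).op τ ∈ Set.range (X.σ 0) := by
  constructor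
  · rintro ⟨y, rfl⟩
    exact ⟨_, (map_principalEdge_σ_apply i y).symm⟩
  · rintro ⟨x, hx⟩
    obtain ⟨y, -, hy⟩ := Types.exists_of_isPullback (hX.isPullback_σ n i) x τ hx
    exact ⟨y, hy⟩

lemma IsDecomposition.complete (hX : IsDecomposition X)
    (h₀ : Function.Injective (X.σ (0 : Fin 1))) : Complete X := fun n i y z hyz =>
  Types.ext_of_isPullback (hX.isPullback_σ n i)
    (h₀ (by rw [← map_principalEdge_σ_apply, ← map_principalEdge_σ_apply, hyz])) hyz

lemma IsDecomposition.degen_iff_not_effective (hX : IsDecomposition X) {n : ℕ}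
    (τ : X _⦋n + 1⦌) : Degen X τ ↔ ¬ Effective X τ := by
  simp only [Degen, Effective, not_forall, not_not]
  exact exists_congr fun i => hX.mem_range_σ_iff i τ

/-- `ρ` glues `τ` to the degenerate simplex `s₀ σ`, whose first principal edge `s₀ x` is the long
edge of `τ`. -/
lemma IsDecomposition.exists_effective_longEdge_eq (hX : IsDecomposition X) {m r : ℕ}
    {x : X _⦋0⦌} {τ : X _⦋m⦌} (hτ : Effective X τ) (hτx : X.map (longEdgeMap m).op τ = X.σ 0 x)
    {σ : X _⦋r⦌} (hσ : Effective X σ) (hσx : X.map (longEdgeMap r).op σ = X.σ 0 x) :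
    ∃ ρ : X _⦋m + r⦌, Effective X ρ ∧ X.map (longEdgeMap (m + r)).op ρ = X.σ 0 x := by
  have hσ₀ : X.map (vertexMap r 0).op σ = x := by
    rw [vertexMap_zero_eq_comp_longEdgeMap, map_op_comp_apply, hσx, σ_apply_eq_map,
      ← map_op_comp_apply, isTerminalZero.hom_ext (vertexMap 1 0 ≫ SimplexCategory.σ 0) (𝟙 _)]
    simp
  obtain ⟨ρ, hρτ, hρσ⟩ := Types.exists_of_isPullback (hX _ _ _ _ (isGeneric_longEdgeMap m)
    (isFree_principalEdge _ _) (isPushout_glueMap m r)) τ (X.σ 0 σ)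
    (by rw [hτx, map_principalEdge_σ_apply, hσ₀])
  refine ⟨ρ, fun i => ?_, ?_⟩
  · induction i using Fin.addCases with
    | left j => rw [principalEdge_castAdd, map_op_comp_apply, hρτ]; exact hτ j
    | right j =>
      rw [principalEdge_natAdd, map_op_comp_apply, hρσ, σ_apply_eq_map, ← map_op_comp_apply,
        principalEdge_succ_comp_σ_zero]
      exact hσ j
  · rw [longEdgeMap_eq_comp_glueMap, map_op_comp_apply, hρσ, σ_apply_eq_map,
      ← map_op_comp_apply, longEdgeMap_succ_comp_σ_zero, hσx]

lemma IsDecomposition.exists_le_effective_longEdge_eq (hX : IsDecomposition X) {r : ℕ}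
    (hr : 0 < r) {x : X _⦋0⦌} {σ : X _⦋r⦌} (hσ : Effective X σ)
    (hσx : X.map (longEdgeMap r).op σ = X.σ 0 x) (N : ℕ) :
    ∃ m, N ≤ m ∧ ∃ τ : X _⦋m⦌, Effective X τ ∧ X.map (longEdgeMap m).op τ = X.σ 0 x := by
  induction N with
  | zero => exact ⟨r, Nat.zero_le _, σ, hσ, hσx⟩
  | succ N ih =>
    obtain ⟨m, hm, τ, hτ, hτx⟩ := ih
    exact ⟨m + r, by omega, hX.exists_effective_longEdge_eq hτ hτx hσ hσx⟩

lemma Tight.longEdge_not_mem_range_σ (hX : Tight X) {r : ℕ} (hr : 0 < r) {σ : X _⦋r⦌}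
    (hσ : Effective X σ) : X.map (longEdgeMap r).op σ ∉ Set.range (X.σ 0) := by
  rintro ⟨x, hx⟩
  obtain ⟨N, hN⟩ := hX.2.2 (X.σ 0 x)
  obtain ⟨m, hm, τ, hτ, hτx⟩ := hX.1.exists_le_effective_longEdge_eq hr hσ hx.symm (N + 1)
  have := hN m τ hτ hτx
  omega

lemma Effective.map_of_isFree {d n : ℕ} {f : ⦋d⦌ ⟶ ⦋n⦌} (hf : IsFree f) {σ : X _⦋n⦌}
    (hσ : Effective X σ) : Effective X (X.map f.op σ) := fun j => by
  have := hf.apply_le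
  have hj : principalEdge d j ≫ f = principalEdge n ⟨f.toOrderHom 0 + j, by simp at this; omega⟩ :=
    hom_ext_val fun t => by simp [hf (principalEdge d j |>.toOrderHom t), add_assoc]
  rw [← map_op_comp_apply, hj]
  exact hσ _

lemma Tight.map_not_mem_range_σ_of_injective (hX : Tight X) {n : ℕ} {σ : X _⦋n⦌}
    (hσ : Effective X σ) (e : ⦋1⦌ ⟶ ⦋n⦌) (he : Function.Injective e.toOrderHom) :
    X.map e.op σ ∉ Set.range (X.σ 0) := by
  obtain ⟨d, hd, f, hf, rfl⟩ := exists_longEdgeMap_comp_eq e he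
  rw [map_op_comp_apply]
  exact hX.longEdge_not_mem_range_σ hd (hσ.map_of_isFree hf)

lemma Tight.effective_δ (hX : Tight X) {n : ℕ} (i : Fin (n + 2)) {σ : X _⦋n + 1⦌}
    (hσ : Effective X σ) : Effective X (X.δ i σ) := fun j => by
  rw [show X.δ i σ = X.map (SimplexCategory.δ i).op σ from rfl, ← map_op_comp_apply]
  refine hX.map_not_mem_range_σ_of_injective hσ _ fun s t hst => Fin.ext ?_
  have := congrArg Fin.val hst
  simp only [comp_apply_val, δ_apply_val, principalEdge_apply] at this
  by_cases hs : (j : ℕ) + s < i <;> by_cases ht : (j : ℕ) + t < i <;>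
    simp only [hs, ht, if_true, if_false] at this <;> omega

end DecompositionSpace

theorem statement16 (X : SSet) (hX : Tight X) :
    Split X ∧
    (∀ (n : ℕ) (σ : X _⦋n + 1⦌), Effective X σ →
      X.map (longEdgeMap (n + 1)).op σ ∉ Set.range (X.σ (0 : Fin 1))) ∧
    (∀ (n : ℕ) (σ : X _⦋n⦌), Effective X σ →
      ∀ e : SimplexCategory.mk 1 ⟶ SimplexCategory.mk n,
        Function.Injective e.toOrderHom → X.map e.op σ ∉ Set.range (X.σ (0 : Fin 1))) ∧
    (∀ (n : ℕ) (i : Fin (n + 2)) (σ : X _⦋n + 1⦌), Effective X σ → Effective X (X.δ i σ)) := by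
  refine ⟨⟨hX.1.complete hX.2.1, fun n i σ hσ => ?_⟩,
    fun n σ hσ => hX.longEdge_not_mem_range_σ n.succ_pos hσ,
    fun n σ hσ e he => hX.map_not_mem_range_σ_of_injective hσ e he,
    fun n i σ hσ => hX.effective_δ i hσ⟩
  rw [hX.1.degen_iff_not_effective, not_not] at hσ ⊢
  exact hX.effective_δ i hσ
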